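/- Let B ∈ R^{n×n} be invertible with Gram–Schmidt vectors b_1^*,...,b_n^* and coefficients μ_{j,i} satisfying |μ_{j,i}| ≤ 1/2 for j < i. Then for the Babai rounding error e = t − B⌊B^{-1}t⌉, one has the squared-norm bound ‖e‖² ≤ (1/4) Σ_{j=1}^n (1 + (n−j)/2)² ‖b_j^*‖², and in particular if additionally ‖b_j^*‖ ≤ M for all j, then ‖e‖ ≤ (M/2) √(Σ_{k=0}^{n−1} (1 + k/2)²). -/

import Mathlib

/-! Expanding each `b i` in the orthogonal Gram–Schmidt family, `b i = ∑ j, μ j i • b* j` with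
`μ` unit upper triangular, the rounding error `e = ∑ i, δ i • b i` (`|δ i| ≤ 1/2`) has coordinate
`α j = ∑_{i ≥ j} δ i * μ j i` along `b* j`. Pythagoras gives `‖e‖² = ∑ j, α j ² ‖b* j‖²`, and size
reduction `|μ j i| ≤ 1/2` bounds `|α j| ≤ 1/2 + (n - 1 - j)/4`. -/

open Finset

/-- Gram–Schmidt orthogonalization of a family of vectors in `EuclideanSpace ℝ (Fin n)`. -/
noncomputable def gramSchmidtFin (n : ℕ) (b : Fin n → EuclideanSpace ℝ (Fin n)) :
    Fin n → EuclideanSpace ℝ (Fin n) :=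
  @InnerProductSpace.gramSchmidt ℝ _ _ _ _ (Fin n) _ _ (inferInstanceAs (WellFoundedLT (Fin n))) b

open InnerProductSpace Matrix
open scoped RealInnerProductSpace

theorem norm_sum_smul_sq_of_pairwise_inner_eq_zero {E ι : Type*} [NormedAddCommGroup E]
    [InnerProductSpace ℝ E] [Fintype ι] {v : ι → E} (hv : Pairwise fun i j => ⟪v i, v j⟫ = 0)
    (a : ι → ℝ) : ‖∑ j, a j • v j‖ ^ 2 = ∑ j, a j ^ 2 * ‖v j‖ ^ 2 := by
  classical
  rw [← real_inner_self_eq_norm_sq, sum_inner]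
  refine sum_congr rfl fun j _ => ?_
  rw [inner_sum, sum_eq_single j (fun k _ hkj => by
    rw [real_inner_smul_left, real_inner_smul_right, hv hkj.symm, mul_zero, mul_zero]) (by simp)]
  rw [real_inner_smul_left, real_inner_smul_right, real_inner_self_eq_norm_sq]
  ring

section GramSchmidt

variable {E : Type*} [NormedAddCommGroup E] [InnerProductSpace ℝ E]
  {ι : Type*} [LinearOrder ι] [LocallyFiniteOrderBot ι] [WellFoundedLT ι]

/-- The Gram–Schmidt coefficient `μ_{j,i}`. -/
noncomputable def gramSchmidtCoeff (f : ι → E) (j i : ι) : ℝ :=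
  ⟪f i, gramSchmidt ℝ f j⟫ / ‖gramSchmidt ℝ f j‖ ^ 2

theorem real_inner_gramSchmidt_same (f : ι → E) (i : ι) :
    ⟪f i, gramSchmidt ℝ f i⟫ = ‖gramSchmidt ℝ f i‖ ^ 2 := by
  conv_lhs => rw [gramSchmidt_def'' ℝ f i]
  have horth : ∀ j ∈ Iio i, ⟪gramSchmidt ℝ f j, gramSchmidt ℝ f i⟫ = 0 := fun j hj =>
    gramSchmidt_orthogonal ℝ f (mem_Iio.1 hj).ne
  rw [inner_add_left, sum_inner, sum_eq_zero fun j hj => by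
    rw [real_inner_smul_left, horth j hj, mul_zero], add_zero, real_inner_self_eq_norm_sq]

theorem gramSchmidtCoeff_of_lt (f : ι → E) {i j : ι} (hij : i < j) :
    gramSchmidtCoeff f j i = 0 := by
  rw [gramSchmidtCoeff, real_inner_comm, gramSchmidt_inv_triangular ℝ f hij, zero_div]

theorem gramSchmidtCoeff_self_smul (f : ι → E) (i : ι) :
    gramSchmidtCoeff f i i • gramSchmidt ℝ f i = gramSchmidt ℝ f i := by
  rcases eq_or_ne (gramSchmidt ℝ f i) 0 with h | h
  · rw [h, smul_zero]
  · rw [gramSchmidtCoeff, real_inner_gramSchmidt_same, div_self (by positivity), one_smul]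

/-- `μ j j` is `1`, or `0` (division by zero) when the `j`-th Gram–Schmidt vector vanishes. -/
theorem abs_gramSchmidtCoeff_self_le_one (f : ι → E) (i : ι) :
    |gramSchmidtCoeff f i i| ≤ 1 := by
  rw [gramSchmidtCoeff, real_inner_gramSchmidt_same, abs_of_nonneg (by positivity)]
  exact div_self_le_one _

theorem sum_gramSchmidtCoeff_smul [Fintype ι] (f : ι → E) (i : ι) :
    ∑ j, gramSchmidtCoeff f j i • gramSchmidt ℝ f j = f i := by
  rw [← sum_subset (subset_univ (Iic i)) fun j _ hj => by
    rw [gramSchmidtCoeff_of_lt f (not_le.1 (mem_Iic.not.1 hj)), zero_smul]]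
  rw [← Iio_insert, sum_insert notMem_Iio_self, gramSchmidtCoeff_self_smul]
  conv_rhs => rw [gramSchmidt_def'' ℝ f i]
  simp [gramSchmidtCoeff, real_inner_comm]

theorem norm_sum_smul_sq_eq_sum_gramSchmidt [Fintype ι] (f : ι → E) (δ : ι → ℝ) :
    ‖∑ i, δ i • f i‖ ^ 2 =
      ∑ j, (∑ i, δ i * gramSchmidtCoeff f j i) ^ 2 * ‖gramSchmidt ℝ f j‖ ^ 2 := by
  have hexp : ∑ i, δ i • f i = ∑ j, (∑ i, δ i * gramSchmidtCoeff f j i) • gramSchmidt ℝ f j := by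
    conv_lhs => enter [2, i]; rw [← sum_gramSchmidtCoeff_smul f i]
    simp only [smul_sum, smul_smul, sum_smul]
    exact sum_comm
  rw [hexp, norm_sum_smul_sq_of_pairwise_inner_eq_zero (gramSchmidt_pairwise_orthogonal ℝ f)]

theorem abs_sum_mul_gramSchmidtCoeff_le [Fintype ι] [LocallyFiniteOrderTop ι] (f : ι → E)
    {δ : ι → ℝ} (hδ : ∀ i, |δ i| ≤ 1 / 2) {j : ι}
    (hμ : ∀ i, j < i → |gramSchmidtCoeff f j i| ≤ 1 / 2) :
    |∑ i, δ i * gramSchmidtCoeff f j i| ≤ 1 / 2 * (1 + #(Ioi j) / 2) := by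
  rw [← sum_subset (subset_univ (Ici j)) fun i _ hi => by
    rw [gramSchmidtCoeff_of_lt f (not_le.1 (mem_Ici.not.1 hi)), mul_zero]]
  rw [← Ioi_insert, sum_insert notMem_Ioi_self]
  have hdiag : |δ j * gramSchmidtCoeff f j j| ≤ 1 / 2 := by
    rw [abs_mul]
    nlinarith [abs_nonneg (δ j), hδ j, abs_gramSchmidtCoeff_self_le_one f j]
  have hoff : ∑ i ∈ Ioi j, |δ i * gramSchmidtCoeff f j i| ≤ #(Ioi j) * (1 / 4) := by
    rw [← nsmul_eq_mul]
    refine sum_le_card_nsmul _ _ _ fun i hi => ?_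
    rw [abs_mul]
    nlinarith [abs_nonneg (δ i), hδ i, abs_nonneg (gramSchmidtCoeff f j i), hμ i (mem_Ioi.1 hi)]
  calc _ ≤ |δ j * gramSchmidtCoeff f j j| + ∑ i ∈ Ioi j, |δ i * gramSchmidtCoeff f j i| :=
        (abs_add_le _ _).trans (add_le_add le_rfl (abs_sum_le_sum_abs _ _))
    _ ≤ 1 / 2 * (1 + #(Ioi j) / 2) := by linarith

theorem norm_sum_smul_sq_le_of_abs_gramSchmidtCoeff_le [Fintype ι] [LocallyFiniteOrderTop ι]
    (f : ι → E) {δ : ι → ℝ} (hδ : ∀ i, |δ i| ≤ 1 / 2)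
    (hμ : ∀ j i, j < i → |gramSchmidtCoeff f j i| ≤ 1 / 2) :
    ‖∑ i, δ i • f i‖ ^ 2 ≤ 1 / 4 * ∑ j, (1 + #(Ioi j) / 2 : ℝ) ^ 2 * ‖gramSchmidt ℝ f j‖ ^ 2 := by
  rw [norm_sum_smul_sq_eq_sum_gramSchmidt, mul_sum]
  refine sum_le_sum fun j _ => ?_
  have hα := abs_sum_mul_gramSchmidtCoeff_le f hδ (hμ j)
  have hα2 := sq_le_sq' (neg_le_of_abs_le hα) (le_of_abs_le hα)
  nlinarith [sq_nonneg ‖gramSchmidt ℝ f j‖]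

end GramSchmidt

theorem gramSchmidtFin_eq (n : ℕ) (b : Fin n → EuclideanSpace ℝ (Fin n)) :
    gramSchmidtFin n b = gramSchmidt ℝ b :=
  rfl

theorem toLp_mulVec_eq_sum_smul {m n : Type*} [Fintype n] {B : Matrix m n ℝ}
    {b : n → EuclideanSpace ℝ m} (hb : ∀ i k, b i k = B k i) (x : n → ℝ) :
    WithLp.toLp 2 (B *ᵥ x) = ∑ i, x i • b i := by
  ext k
  simp [Matrix.mulVec, dotProduct, hb, mul_comm]

theorem sub_mulVec_eq_mulVec_sub {m R : Type*} [Fintype m] [DecidableEq m] [CommRing R]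
    {B : Matrix m m R} (hB : IsUnit B.det) (t z : m → R) :
    t - B *ᵥ z = B *ᵥ (B⁻¹ *ᵥ t - z) := by
  rw [mulVec_sub, mulVec_mulVec, mul_nonsing_inv _ hB, one_mulVec]

theorem babai_rounding_squared_error_bound
    (n : ℕ) (B : Matrix (Fin n) (Fin n) ℝ) (hB : IsUnit B.det)
    (b : Fin n → EuclideanSpace ℝ (Fin n)) (hbcol : ∀ i k, b i k = B k i)
    (bstar : Fin n → EuclideanSpace ℝ (Fin n)) (hbstar : bstar = gramSchmidtFin n b)
    (μ : Fin n → Fin n → ℝ)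
    (hμdef : ∀ j i, μ j i = (inner ℝ (b i) (bstar j) : ℝ) / ‖bstar j‖ ^ 2)
    (hμ : ∀ j i : Fin n, j < i → |μ j i| ≤ 1 / 2)
    (t : Fin n → ℝ)
    (e : Fin n → ℝ) (he : e = t - B.mulVec (fun i => (round (B⁻¹.mulVec t i) : ℝ))) :
    ‖(WithLp.equiv 2 (Fin n → ℝ)).symm e‖ ^ 2 ≤
        (1 / 4) * ∑ j : Fin n,
          (1 + ((n - 1 - (j : ℕ) : ℕ) : ℝ) / 2) ^ 2 * ‖bstar j‖ ^ 2 ∧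
      ∀ M : ℝ, (∀ j, ‖bstar j‖ ≤ M) →
        ‖(WithLp.equiv 2 (Fin n → ℝ)).symm e‖ ≤
          (M / 2) * Real.sqrt (∑ k ∈ range n, (1 + (k : ℝ) / 2) ^ 2) := by
  rw [gramSchmidtFin_eq] at hbstar
  subst hbstar
  set δ : Fin n → ℝ := B⁻¹ *ᵥ t - fun i => (round ((B⁻¹ *ᵥ t) i) : ℝ)
  have hδ : ∀ i, |δ i| ≤ 1 / 2 := fun i => abs_sub_round _
  obtain rfl : μ = gramSchmidtCoeff b := funext fun j => funext (hμdef j)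
  have hsq := norm_sum_smul_sq_le_of_abs_gramSchmidtCoeff_le b hδ hμ
  simp only [Fin.card_Ioi] at hsq
  rw [← toLp_mulVec_eq_sum_smul hbcol, ← sub_mulVec_eq_mulVec_sub hB, ← he] at hsq
  refine ⟨hsq, fun M hM => ?_⟩
  rcases n.eq_zero_or_pos with rfl | hn
  · simp [EuclideanSpace.norm_eq]
  have hM0 : 0 ≤ M := (norm_nonneg _).trans (hM ⟨0, hn⟩)
  have hreflect : ∑ j : Fin n, (1 + ((n - 1 - (j : ℕ) : ℕ) : ℝ) / 2) ^ 2 =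
      ∑ k ∈ range n, (1 + (k : ℝ) / 2) ^ 2 := by
    rw [Fin.sum_univ_eq_sum_range (fun j => (1 + ((n - 1 - j : ℕ) : ℝ) / 2) ^ 2)]
    exact sum_range_reflect (fun k => (1 + (k : ℝ) / 2) ^ 2) n
  have hsqM : ‖(WithLp.equiv 2 (Fin n → ℝ)).symm e‖ ^ 2 ≤
      (M / 2) ^ 2 * ∑ k ∈ range n, (1 + (k : ℝ) / 2) ^ 2 := by
    calc _ ≤ 1 / 4 * ∑ j : Fin n, (1 + ((n - 1 - (j : ℕ) : ℕ) : ℝ) / 2) ^ 2 * M ^ 2 := by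
          refine hsq.trans ?_
          gcongr with j
          exact hM j
      _ = _ := by rw [← hreflect, ← sum_mul]; ring
  rw [← Real.sqrt_sq (by positivity : 0 ≤ M / 2), ← Real.sqrt_mul (sq_nonneg _)]
  exact Real.le_sqrt_of_sq_le hsqM
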